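/- Let m ≥ 1 and let L ⊂ ℝ^d have distinct distances and no infinite descending chains. Then there exists a unique stable m-matching of L; moreover, in this stable m-matching at most m points of L have strictly fewer than m partners. -/

import Mathlib

/-!
A set without descending chains meets every ball in finitely many points (otherwise points
accumulating geometrically fast at a limit form a descending chain), and the relation "`p` is a
strictly shorter pair sharing an endpoint with `q`" is well-founded: along a descending sequence
of such pairs, the shared endpoints either form a descending chain after removing repetitions, or
stay at one point `x` that then has infinitely many partners in a ball around it.

Well-founded recursion along this relation defines the greedy matching: a pair is matched iff
both endpoints have fewer than `m` partners among strictly shorter pairs. With distinct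
distances, `D(x) > |x - y|` for an unmatched pair says exactly that `x` has fewer than `m`
partners closer than `y`, so an `m`-matching is stable iff it satisfies the greedy
characterisation, which has exactly one solution by well-founded induction. In a stable matching
any two points with fewer than `m` partners are matched to each other, so there are at most `m`
of them.
-/

noncomputable section

/-- Points of `ℝ^d` with the Euclidean norm. -/
abbrev Pt (d : ℕ) := EuclideanSpace ℝ (Fin d)

/-- `L` has all pairwise distances distinct: the distance determines the unordered pair. -/
def DistinctDist {d : ℕ} (L : Set (Pt d)) : Prop :=
  ∀ x ∈ L, ∀ y ∈ L, ∀ z ∈ L, ∀ w ∈ L,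
    x ≠ y → z ≠ w → dist x y = dist z w → (x = z ∧ y = w) ∨ (x = w ∧ y = z)

/-- `L` has no infinite descending chains: no sequence of points of `L` whose consecutive
distances are strictly decreasing. -/
def NoDescChain {d : ℕ} (L : Set (Pt d)) : Prop :=
  ¬ ∃ c : ℕ → Pt d, (∀ n, c n ∈ L) ∧ StrictAnti (fun n => dist (c n) (c (n + 1)))

/-- `R` encodes an `m`-matching of `L` (as the symmetric relation "matched to"): a set of
unordered pairs of distinct points of `L` in which each point lies in at most `m` pairs. -/
def IsMMatching {d : ℕ} (m : ℕ) (L : Set (Pt d)) (R : Pt d → Pt d → Prop) : Prop :=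
  (∀ x y, R x y → R y x) ∧
  (∀ x y, R x y → x ∈ L ∧ y ∈ L ∧ x ≠ y) ∧
  (∀ x : Pt d, {y | R x y}.Finite ∧ {y | R x y}.ncard ≤ m)

/-- `D(x) > r` for the `m`-matching `R`, where `D(x)` is the distance from `x` to its most
distant partner, and `D(x) = ∞` if `x` has strictly fewer than `m` partners. -/
def DGt {d : ℕ} (m : ℕ) (R : Pt d → Pt d → Prop) (x : Pt d) (r : ℝ) : Prop :=
  {y | R x y}.ncard < m ∨ ∃ z, R x z ∧ r < dist x z

/-- `|x − y| ≤ D(x)` for the `m`-matching `R`: `x` desires `y`. -/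
def Desires {d : ℕ} (m : ℕ) (R : Pt d → Pt d → Prop) (x y : Pt d) : Prop :=
  {z | R x z}.ncard < m ∨ ∃ z, R x z ∧ dist x y ≤ dist x z

/-- The `m`-matching `R` of `L` is stable: there are no distinct `x, y ∈ L`, not matched to
each other, with `D(x) > |x − y|` and `D(y) > |x − y|`. -/
def IsMStable {d : ℕ} (m : ℕ) (L : Set (Pt d)) (R : Pt d → Pt d → Prop) : Prop :=
  ¬ ∃ x ∈ L, ∃ y ∈ L, x ≠ y ∧ ¬ R x y ∧ DGt m R x (dist x y) ∧ DGt m R y (dist x y)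


lemma strictAnti_dist_succ_of_four_mul_dist_lt {X : Type*} [PseudoMetricSpace X] {c : ℕ → X}
    {a : X} (h : ∀ n, 4 * dist (c (n + 1)) a < dist (c n) a) :
    StrictAnti fun n => dist (c n) (c (n + 1)) := by
  refine strictAnti_nat_of_succ_lt fun n => ?_
  have h₀ := h n
  have h₁ := h (n + 1)
  have hupper := dist_triangle_right (c (n + 1)) (c (n + 2)) a
  have hlower := dist_triangle (c n) (c (n + 1)) a
  have := dist_nonneg (x := c (n + 2)) (y := a)
  linarith

lemma exists_strictAnti_dist_of_infinite_jumps {X : Type*} [PseudoMetricSpace X] {a : ℕ → X}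
    {D : ℕ → ℝ} (hD : StrictAnti D) (hjump : ∀ n, a (n + 1) ≠ a n → dist (a n) (a (n + 1)) = D n)
    (hinf : {n | a (n + 1) ≠ a n}.Infinite) :
    ∃ u : ℕ → ℕ, StrictAnti fun k => dist (a (u k)) (a (u (k + 1))) := by
  set u := Nat.nth fun n => a (n + 1) ≠ a n
  have hu : StrictMono u := Nat.nth_strictMono hinf
  have hconst : ∀ k, a (u (k + 1)) = a (u k + 1) := by
    intro k
    suffices ∀ j ≥ u k + 1, j ≤ u (k + 1) → a j = a (u k + 1) from this _ (hu k.lt_succ_self) le_rfl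
    refine Nat.le_induction (fun _ => rfl) fun j _ ih hj' => ?_
    have hlt : j < u (k + 1) := hj'
    by_contra hne
    have : j ≤ u k := Nat.le_nth_of_lt_nth_succ hlt (ih hlt.le ▸ hne)
    omega
  refine ⟨u, fun k l hkl => ?_⟩
  simp only [hconst]
  rw [hjump _ (Nat.nth_mem_of_infinite hinf k), hjump _ (Nat.nth_mem_of_infinite hinf l)]
  exact hD (hu hkl)

lemma NoDescChain.finite_inter_closedBall {d : ℕ} {L : Set (Pt d)} (hchain : NoDescChain L)
    (x : Pt d) (r : ℝ) : (L ∩ Metric.closedBall x r).Finite := by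
  by_contra hinf
  obtain ⟨a, -, ha⟩ := Set.Infinite.exists_accPt_of_subset_isCompact hinf
    (isCompact_closedBall x r) Set.inter_subset_right
  have hcloser : ∀ y : {y // y ∈ L ∧ y ≠ a}, ∃ z : {z // z ∈ L ∧ z ≠ a},
      4 * dist z.1 a < dist y.1 a := by
    rintro ⟨y, -, hya⟩
    obtain ⟨z, ⟨hz, hzL, -⟩, hza⟩ := accPt_iff_nhds.1 ha _
      (Metric.ball_mem_nhds a (div_pos (dist_pos.2 hya) four_pos))
    exact ⟨⟨z, hzL, hza⟩, by rw [Metric.mem_ball] at hz; linarith⟩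
  choose g hg using hcloser
  obtain ⟨y₀, ⟨-, hy₀L, -⟩, hy₀a⟩ := accPt_iff_nhds.1 ha _ Filter.univ_mem
  refine hchain ⟨fun n => (g^[n] ⟨y₀, hy₀L, hy₀a⟩).1, fun n => (g^[n] _).2.1,
    strictAnti_dist_succ_of_four_mul_dist_lt (a := a) fun n => ?_⟩
  rw [Function.iterate_succ_apply']
  exact hg _

def ShorterAdj {d : ℕ} (L : Set (Pt d)) (p q : Pt d × Pt d) : Prop :=
  p.1 ∈ L ∧ p.2 ∈ L ∧ (p.1 = q.1 ∨ p.1 = q.2) ∧ dist p.1 p.2 < dist q.1 q.2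

lemma NoDescChain.wellFounded_shorterAdj {d : ℕ} {L : Set (Pt d)} (hchain : NoDescChain L) :
    WellFounded (ShorterAdj L) := by
  refine wellFounded_iff_isEmpty_descending_chain.2 ⟨fun ⟨f, hf⟩ => ?_⟩
  set a : ℕ → Pt d := fun n => (f (n + 1)).1
  set b : ℕ → Pt d := fun n => (f (n + 1)).2
  set D : ℕ → ℝ := fun n => dist (a n) (b n)
  have hD : StrictAnti D := strictAnti_nat_of_succ_lt fun n => (hf (n + 1)).2.2.2
  have hstep : ∀ n, a (n + 1) = a n ∨ a (n + 1) = b n := fun n => (hf (n + 1)).2.2.1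
  by_cases hjumps : {n | a (n + 1) ≠ a n}.Infinite
  · have hjump : ∀ n, a (n + 1) ≠ a n → dist (a n) (a (n + 1)) = D n := fun n hn => by
      rw [(hstep n).resolve_left hn]
    obtain ⟨u, hu⟩ := exists_strictAnti_dist_of_infinite_jumps hD hjump hjumps
    exact hchain ⟨fun k => a (u k), fun k => (hf (u k)).1, hu⟩
  · -- from some point on all pairs share their first point, so their second points are
    -- infinitely many distinct points of `L` in a ball around it
    obtain ⟨N, hN⟩ := (Set.not_infinite.1 hjumps).bddAbove
    have hconst : ∀ n ≥ N + 1, a n = a (N + 1) := by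
      refine Nat.le_induction rfl fun n _ ih => ?_
      by_contra hne
      have := hN (show n ∈ {n | a (n + 1) ≠ a n} from fun h => hne (h.trans ih))
      omega
    have hdist : ∀ n, dist (a (N + 1)) (b (n + N + 1)) = D (n + N + 1) := fun n => by
      rw [← hconst (n + N + 1) (by omega)]
    refine Set.infinite_range_of_injective (f := fun n => b (n + N + 1)) (fun i j hij => ?_)
      ((hchain.finite_inter_closedBall (a (N + 1)) (D 0)).subset ?_)
    · have hij : b (i + N + 1) = b (j + N + 1) := hij
      have := hD.injective ((hdist i).symm.trans (hij ▸ hdist j))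
      omega
    · rintro _ ⟨n, rfl⟩
      refine ⟨(hf (n + N + 1)).2.1, ?_⟩
      rw [Metric.mem_closedBall, dist_comm, hdist]
      exact hD.antitone (Nat.zero_le _)

section Matching

variable {d m : ℕ} {L : Set (Pt d)} {R : Pt d → Pt d → Prop}

lemma DistinctDist.eq_of_dist_eq (hdist : DistinctDist L) {x y z : Pt d} (hx : x ∈ L)
    (hy : y ∈ L) (hz : z ∈ L) (hxy : x ≠ y) (hxz : x ≠ z) (h : dist x y = dist x z) : y = z := by
  rcases hdist x hx y hy x hx z hz hxy hxz h with ⟨-, h⟩ | ⟨h, -⟩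
  exacts [h, absurd h hxz]

lemma IsMMatching.ncard_closer_lt (hR : IsMMatching m L R) {x w : Pt d} {r : ℝ} (hw : R x w)
    (hr : r ≤ dist x w) : {z | R x z ∧ dist x z < r}.ncard < m := by
  have hsub : {z | R x z ∧ dist x z < r} ⊂ {z | R x z} :=
    Set.ssubset_iff_of_subset (fun z hz => hz.1) |>.2 ⟨w, hw, fun h => (h.2.trans_le hr).false⟩
  exact (Set.ncard_lt_ncard hsub (hR.2.2 x).1).trans_le (hR.2.2 x).2

lemma IsMMatching.ncard_closer_lt_of_dGt (hR : IsMMatching m L R) {x : Pt d} {r : ℝ}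
    (h : DGt m R x r) : {z | R x z ∧ dist x z < r}.ncard < m := by
  rcases h with h | ⟨w, hw, hr⟩
  · exact (Set.ncard_le_ncard (fun z hz => hz.1) (hR.2.2 x).1).trans_lt h
  · exact hR.ncard_closer_lt hw hr.le

lemma IsMMatching.dGt_of_ncard_closer_lt (hdist : DistinctDist L) (hR : IsMMatching m L R)
    {x y : Pt d} (hy : y ∈ L) (hxy : x ≠ y) (hnR : ¬ R x y)
    (h : {z | R x z ∧ dist x z < dist x y}.ncard < m) : DGt m R x (dist x y) := by
  refine (lt_or_ge {z | R x z}.ncard m).imp id fun hm => ?_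
  obtain ⟨w, hw, hyw⟩ : ∃ w, R x w ∧ dist x y ≤ dist x w := by
    by_contra! hcloser
    have := Set.ncard_le_ncard (s := {z | R x z}) (t := {z | R x z ∧ dist x z < dist x y})
      (fun z hz => ⟨hz, hcloser z hz⟩) ((hR.2.2 x).1.subset fun z hz => hz.1)
    omega
  obtain ⟨hx, hwL, hxw⟩ := hR.2.1 x w hw
  refine ⟨w, hw, hyw.lt_of_ne fun heq => hnR ?_⟩
  rwa [hdist.eq_of_dist_eq hx hy hwL hxy hxw heq]

lemma IsMStable.exists_finset_deficient (hR : IsMMatching m L R) (hst : IsMStable m L R) :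
    ∃ s : Finset (Pt d), s.card ≤ m ∧ ∀ x ∈ L, {y | R x y}.ncard < m → x ∈ s := by
  set S := {x | x ∈ L ∧ {y | R x y}.ncard < m}
  have hfin : S.Finite ∧ S.ncard ≤ m := by
    rcases S.eq_empty_or_nonempty with hS | ⟨x₀, hx₀L, hx₀⟩
    · simp [hS]
    · -- any two deficient points would form a blocking pair unless they are matched
      have hsub : S ⊆ insert x₀ {y | R x₀ y} := fun y ⟨hyL, hy⟩ =>
        or_iff_not_imp_left.2 fun hne => by_contra fun hnR =>
          hst ⟨x₀, hx₀L, y, hyL, Ne.symm hne, hnR, Or.inl hx₀, Or.inl hy⟩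
      have hfin := (hR.2.2 x₀).1.insert x₀
      refine ⟨hfin.subset hsub, ?_⟩
      have := Set.ncard_insert_le x₀ {y | R x₀ y}
      have := Set.ncard_le_ncard hsub hfin
      omega
  refine ⟨hfin.1.toFinset, ?_, fun x hx h => hfin.1.mem_toFinset.2 ⟨hx, h⟩⟩
  rw [← Set.ncard_eq_toFinset_card _ hfin.1]
  exact hfin.2

/-- The outcome of scanning all pairs by increasing length and matching a pair whenever both of
its endpoints still have fewer than `m` partners. (Under `NoDescChain` the sets below are finite,
so `ncard` does not take its junk value `0`.) -/
def IsGreedy (m : ℕ) (L : Set (Pt d)) (R : Pt d → Pt d → Prop) : Prop :=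
  ∀ x y, R x y ↔ x ∈ L ∧ y ∈ L ∧ x ≠ y ∧
    {z | R x z ∧ dist x z < dist x y}.ncard < m ∧ {z | R y z ∧ dist y z < dist x y}.ncard < m

theorem isMStable_iff_isGreedy (hdist : DistinctDist L) (hR : IsMMatching m L R) :
    IsMStable m L R ↔ IsGreedy m L R := by
  constructor
  · refine fun hst x y => ⟨fun hxy => ?_, fun ⟨hx, hy, hxy, hcx, hcy⟩ => by_contra fun hnR => ?_⟩
    · exact ⟨(hR.2.1 x y hxy).1, (hR.2.1 x y hxy).2.1, (hR.2.1 x y hxy).2.2,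
        hR.ncard_closer_lt hxy le_rfl, hR.ncard_closer_lt (hR.1 x y hxy) (dist_comm x y).le⟩
    · have hnR' : ¬ R y x := fun h => hnR (hR.1 y x h)
      refine hst ⟨x, hx, y, hy, hxy, hnR, hR.dGt_of_ncard_closer_lt hdist hy hxy hnR hcx, ?_⟩
      rw [dist_comm] at hcy ⊢
      exact hR.dGt_of_ncard_closer_lt hdist hx hxy.symm hnR' hcy
  · rintro hG ⟨x, hx, y, hy, hxy, hnR, hDx, hDy⟩
    exact hnR ((hG x y).2 ⟨hx, hy, hxy, hR.ncard_closer_lt_of_dGt hDx,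
      hR.ncard_closer_lt_of_dGt hDy⟩)

end Matching

namespace IsGreedy

variable {d m : ℕ} {L : Set (Pt d)} {R : Pt d → Pt d → Prop}

lemma mem (hG : IsGreedy m L R) {x y : Pt d} (h : R x y) : x ∈ L ∧ y ∈ L ∧ x ≠ y :=
  let ⟨hx, hy, hxy, _⟩ := (hG x y).1 h
  ⟨hx, hy, hxy⟩

lemma symm (hG : IsGreedy m L R) {x y : Pt d} (h : R x y) : R y x := by
  obtain ⟨hx, hy, hxy, hcx, hcy⟩ := (hG x y).1 h
  rw [dist_comm] at hcx hcy
  exact (hG y x).2 ⟨hy, hx, hxy.symm, hcy, hcx⟩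

lemma card_le_of_subset_partners (hdist : DistinctDist L) (hchain : NoDescChain L)
    (hG : IsGreedy m L R) {x : Pt d} {T : Finset (Pt d)} (hT : ↑T ⊆ {y | R x y}) :
    T.card ≤ m := by
  rcases T.eq_empty_or_nonempty with rfl | hne
  · simp
  obtain ⟨y, hyT, hfar⟩ := T.exists_max_image (dist x) hne
  obtain ⟨hx, hy, hxy, hcloser, -⟩ := (hG x y).1 (hT hyT)
  have hsub : ↑(T.erase y) ⊆ {z | R x z ∧ dist x z < dist x y} := fun z hz => by
    obtain ⟨hzy, hzT⟩ := Finset.mem_erase.1 hz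
    obtain ⟨-, hz, hxz⟩ := hG.mem (hT hzT)
    exact ⟨hT hzT, (hfar z hzT).lt_of_ne fun h => hzy (hdist.eq_of_dist_eq hx hz hy hxz hxy h)⟩
  have hfin : {z | R x z ∧ dist x z < dist x y}.Finite :=
    (hchain.finite_inter_closedBall x (dist x y)).subset fun z hz =>
      ⟨(hG.mem hz.1).2.1, Metric.mem_closedBall.2 (by rw [dist_comm]; exact hz.2.le)⟩
  have := Set.ncard_le_ncard hsub hfin
  rw [Set.ncard_coe_finset, Finset.card_erase_of_mem hyT] at this
  omega

lemma isMMatching (hdist : DistinctDist L) (hchain : NoDescChain L) (hG : IsGreedy m L R) :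
    IsMMatching m L R := by
  refine ⟨fun x y => hG.symm, fun x y => hG.mem, fun x => ?_⟩
  have hfin : {y | R x y}.Finite := by
    by_contra hinf
    obtain ⟨T, hT, hcard⟩ := Set.Infinite.exists_subset_card_eq hinf (m + 1)
    have := hG.card_le_of_subset_partners hdist hchain hT
    omega
  refine ⟨hfin, ?_⟩
  rw [Set.ncard_eq_toFinset_card _ hfin]
  exact hG.card_le_of_subset_partners (x := x) hdist hchain (by simp)

lemma unique (hwf : WellFounded (ShorterAdj L)) {R' : Pt d → Pt d → Prop} (hG : IsGreedy m L R)
    (hG' : IsGreedy m L R') : R = R' := by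
  suffices ∀ p : Pt d × Pt d, R p.1 p.2 ↔ R' p.1 p.2 from
    funext₂ fun x y => propext (this (x, y))
  refine fun p => hwf.induction (C := fun p => R p.1 p.2 ↔ R' p.1 p.2) p fun ⟨x, y⟩ ih => ?_
  rw [hG, hG']
  refine and_congr_right fun hx => and_congr_right fun hy => and_congr_right fun _ => ?_
  have hcloser : ∀ w, (w = x ∨ w = y) →
      {z | R w z ∧ dist w z < dist x y} = {z | R' w z ∧ dist w z < dist x y} := by
    refine fun w hw => Set.ext fun z => and_congr_left fun hlt => ?_
    have hwL : w ∈ L := by rcases hw with rfl | rfl <;> assumption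
    by_cases hz : z ∈ L
    · exact ih (w, z) ⟨hwL, hz, hw, hlt⟩
    · exact iff_of_false (fun h => hz (hG.mem h).2.1) (fun h => hz (hG'.mem h).2.1)
  rw [hcloser x (Or.inl rfl), hcloser y (Or.inr rfl)]

end IsGreedy

section Greedy

variable {d : ℕ} {L : Set (Pt d)}

def greedyRel (m : ℕ) (hwf : WellFounded (ShorterAdj L)) (x y : Pt d) : Prop :=
  hwf.fix (C := fun _ => Prop) (fun p rec => p.1 ∈ L ∧ p.2 ∈ L ∧ p.1 ≠ p.2 ∧
    {z | ∃ h : ShorterAdj L (p.1, z) p, rec (p.1, z) h}.ncard < m ∧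
    {z | ∃ h : ShorterAdj L (p.2, z) p, rec (p.2, z) h}.ncard < m) (x, y)

lemma greedyRel_eq (m : ℕ) (hwf : WellFounded (ShorterAdj L)) (x y : Pt d) :
    greedyRel m hwf x y = (x ∈ L ∧ y ∈ L ∧ x ≠ y ∧
      {z | ShorterAdj L (x, z) (x, y) ∧ greedyRel m hwf x z}.ncard < m ∧
      {z | ShorterAdj L (y, z) (x, y) ∧ greedyRel m hwf y z}.ncard < m) := by
  rw [greedyRel, hwf.fix_eq]
  simp only [exists_prop]
  rfl

lemma isGreedy_greedyRel (m : ℕ) (hwf : WellFounded (ShorterAdj L)) :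
    IsGreedy m L (greedyRel m hwf) := by
  intro x y
  rw [greedyRel_eq]
  refine and_congr_right fun hx => and_congr_right fun hy => and_congr_right fun _ => ?_
  have hcloser : ∀ w, (w = x ∨ w = y) → {z | ShorterAdj L (w, z) (x, y) ∧ greedyRel m hwf w z} =
      {z | greedyRel m hwf w z ∧ dist w z < dist x y} := by
    refine fun w hw => Set.ext fun z => ⟨fun ⟨⟨_, _, _, hlt⟩, h⟩ => ⟨h, hlt⟩, fun ⟨h, hlt⟩ => ?_⟩
    obtain ⟨hwL, hzL, -⟩ := (greedyRel_eq m hwf w z).mp h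
    exact ⟨⟨hwL, hzL, hw, hlt⟩, h⟩
  rw [hcloser x (Or.inl rfl), hcloser y (Or.inr rfl)]

end Greedy

theorem exists_unique_stable_m_matching_general {d : ℕ} (m : ℕ) (L : Set (Pt d))
    (hdist : DistinctDist L) (hchain : NoDescChain L) :
    (∃! R : Pt d → Pt d → Prop, IsMMatching m L R ∧ IsMStable m L R) ∧
    ∀ R : Pt d → Pt d → Prop, IsMMatching m L R → IsMStable m L R →
      ∃ s : Finset (Pt d), s.card ≤ m ∧
        ∀ x ∈ L, {y | R x y}.ncard < m → x ∈ s := by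
  have hwf := hchain.wellFounded_shorterAdj
  have hG := isGreedy_greedyRel m hwf
  have hM := hG.isMMatching hdist hchain
  refine ⟨⟨greedyRel m hwf, ⟨hM, (isMStable_iff_isGreedy hdist hM).2 hG⟩, ?_⟩,
    fun R hR hst => hst.exists_finset_deficient hR⟩
  rintro R ⟨hR, hst⟩
  exact ((isMStable_iff_isGreedy hdist hR).1 hst).unique hwf hG

/-- for `m ≥ 1`, a set `L` with distinct distances and no infinite descending
chains has a unique stable `m`-matching, in which at most `m` points have strictly fewer
than `m` partners. -/
theorem exists_unique_stable_m_matching {d : ℕ} (m : ℕ) (hm : 1 ≤ m) (L : Set (Pt d))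
    (hdist : DistinctDist L) (hchain : NoDescChain L) :
    (∃! R : Pt d → Pt d → Prop, IsMMatching m L R ∧ IsMStable m L R) ∧
    ∀ R : Pt d → Pt d → Prop, IsMMatching m L R → IsMStable m L R →
      ∃ s : Finset (Pt d), s.card ≤ m ∧
        ∀ x ∈ L, {y | R x y}.ncard < m → x ∈ s :=
  exists_unique_stable_m_matching_general m L hdist hchain
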